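/- arXiv:2310.14367 — 4 statements merged into one kernel-verified Lean document; each statement's English description precedes it below -/
import Mathlib

section
/- Barbălat's lemma: let f : [0, ∞) → ℝ be uniformly continuous and suppose that the limit of ∫₀^y f(x) dx as y → ∞ exists and is finite. Then f(x) → 0 as x → ∞. -/
open Filter Topology Set

/-- **Barbălat's lemma.** If `f : [0, ∞) → ℝ` is uniformly continuous and the integral
function `y ↦ ∫₀^y f` has a finite limit as `y → ∞`, then `f(x) → 0` as `x → ∞`. -/
theorem barbalat (f : ℝ → ℝ)
    (hf : UniformContinuousOn f (Set.Ici 0))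
    (L : ℝ)
    (hlim : Tendsto (fun y : ℝ => ∫ x in (0:ℝ)..y, f x) atTop (𝓝 L)) :
    Tendsto f atTop (𝓝 0) := by
  have hcont : ContinuousOn f (Set.Ici 0) := hf.continuousOn
  by_contra hcon
  rw [Metric.tendsto_atTop] at hcon
  push_neg at hcon
  obtain ⟨ε, hε, hfreq⟩ := hcon
  rw [Metric.uniformContinuousOn_iff] at hf
  obtain ⟨δ, hδ, hunif⟩ := hf (ε / 2) (by linarith)
  set d := δ / 2 with hd
  have hd0 : 0 < d := by positivity
  set η := ε * d / 2 with hη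
  have hη0 : 0 < η := by positivity
  obtain ⟨M, hM⟩ := (Metric.tendsto_atTop.mp hlim) (η / 2) (by positivity)
  obtain ⟨x, hx, hfx⟩ := hfreq (max M 0)
  have hx0 : (0:ℝ) ≤ x := le_trans (le_max_right M 0) hx
  have hxM : M ≤ x := le_trans (le_max_left M 0) hx
  have hint : ∀ a b : ℝ, 0 ≤ a → a ≤ b → IntervalIntegrable f MeasureTheory.volume a b := by
    intro a b ha hab
    apply ContinuousOn.intervalIntegrable
    apply hcont.mono
    rw [Set.uIcc_of_le hab]
    intro t ht
    exact le_trans ha ht.1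
  have hFdiff : (∫ t in (0:ℝ)..(x + d), f t) - ∫ t in (0:ℝ)..x, f t
      = ∫ t in x..(x + d), f t :=
    intervalIntegral.integral_interval_sub_left
      (hint 0 (x + d) le_rfl (by linarith)) (hint 0 x le_rfl hx0)
  have hbound : |∫ t in x..(x + d), f t| < η := by
    rw [← hFdiff]
    have h1 := hM (x + d) (by linarith)
    have h2 := hM x hxM
    rw [Real.dist_eq] at h1 h2
    calc |(∫ t in (0:ℝ)..(x + d), f t) - ∫ t in (0:ℝ)..x, f t|
        ≤ |(∫ t in (0:ℝ)..(x + d), f t) - L| + |L - ∫ t in (0:ℝ)..x, f t| :=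
          abs_sub_le _ _ _
      _ < η / 2 + η / 2 := by
          rw [abs_sub_comm L]
          exact add_lt_add h1 h2
      _ = η := by ring
  have hfx' : ε ≤ |f x| := by
    simpa [Real.dist_eq] using hfx
  have hclose : ∀ t ∈ Set.Icc x (x + d), |f t - f x| < ε / 2 := by
    intro t ht
    have ht0 : (0:ℝ) ≤ t := le_trans hx0 ht.1
    have hdist : dist t x < δ := by
      rw [Real.dist_eq, abs_of_nonneg (by linarith [ht.1])]
      have := ht.2
      simp only [hd] at *
      linarith
    simpa [Real.dist_eq] using hunif t ht0 x hx0 hdist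
  have hintf : IntervalIntegrable f MeasureTheory.volume x (x + d) :=
    hint x (x + d) hx0 (by linarith)
  rcases le_abs.mp hfx' with hpos | hneg
  · -- f x ≥ ε : integral ≥ η
    have hlow : ∀ t ∈ Set.Icc x (x + d), ε / 2 ≤ f t := by
      intro t ht
      have := hclose t ht
      have := abs_lt.mp this
      linarith [this.1]
    have : (x + d - x) • (ε / 2) ≤ ∫ t in x..(x + d), f t := by
      rw [← intervalIntegral.integral_const]
      exact intervalIntegral.integral_mono_on (by linarith) intervalIntegrable_const hintf hlow
    have hval : η ≤ ∫ t in x..(x + d), f t := by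
      have : d * (ε / 2) ≤ ∫ t in x..(x + d), f t := by
        simpa using this
      simp only [hη]
      linarith
    have := le_abs_self (∫ t in x..(x + d), f t)
    linarith
  · -- f x ≤ -ε : integral ≤ -η
    have hlow : ∀ t ∈ Set.Icc x (x + d), f t ≤ -(ε / 2) := by
      intro t ht
      have := hclose t ht
      have := abs_lt.mp this
      linarith [this.2]
    have : (∫ t in x..(x + d), f t) ≤ (x + d - x) • (-(ε / 2)) := by
      rw [← intervalIntegral.integral_const]
      exact intervalIntegral.integral_mono_on (by linarith) hintf intervalIntegrable_const hlow
    have hval : (∫ t in x..(x + d), f t) ≤ -η := by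
      have h' : (∫ t in x..(x + d), f t) ≤ d * (-(ε / 2)) := by simpa using this
      simp only [hη]
      linarith
    have := neg_abs_le (∫ t in x..(x + d), f t)
    linarith
end

section
/- For every maximal forward solution of the shooting system with admissible initial data, and for all ρ ≥ 0 in its domain of existence, the following inequalities hold: κ(ρ) ≥ tanh(ρ) ≥ N(ρ), 0 ≤ ζ(ρ) ≤ √E₀ · sech(ρ), and κ(ρ) + N(ρ) ≤ 2 + √E₀ · sech(ρ). -/
open Filter Topology Set Real

noncomputable section

/-- The initial energy `E₀ = 1 + 2U₀² − (1 − w₀²)²/r₀²`. -/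
def initialEnergy (r₀ w₀ U₀ : ℝ) : ℝ := 1 + 2 * U₀ ^ 2 - (1 - w₀ ^ 2) ^ 2 / r₀ ^ 2

/-- Admissible initial data `(r₀, w₀, U₀)`: `r₀ > 0`, `|w₀| ≤ 1`, `E₀ ≥ 0`. -/
def Admissible (r₀ w₀ U₀ : ℝ) : Prop :=
  0 < r₀ ∧ |w₀| ≤ 1 ∧ 0 ≤ initialEnergy r₀ w₀ U₀

/-- The forward domain `[0, ρmax) ⊆ ℝ`, for `ρmax ∈ (0, ∞]`. -/
def fwdDom (ρmax : EReal) : Set ℝ := {ρ : ℝ | 0 ≤ ρ ∧ (ρ : EReal) < ρmax}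

/-- `(r, N, w, U, κ, ζ)` solves the shooting system on `[0, ρmax)` with
initial data `(r₀, w₀, U₀)` (and `N(0) = κ(0) = 0`, `ζ(0) = √E₀`),
together with the constraint. -/
structure IsShootingSolOn (r₀ w₀ U₀ : ℝ) (ρmax : EReal)
    (r N w U κ ζ : ℝ → ℝ) : Prop where
  init_r : r 0 = r₀
  init_N : N 0 = 0
  init_w : w 0 = w₀
  init_U : U 0 = U₀
  init_κ : κ 0 = 0
  init_ζ : ζ 0 = Real.sqrt (initialEnergy r₀ w₀ U₀)
  r_pos : ∀ ρ ∈ fwdDom ρmax, 0 < r ρ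
  ode_r : ∀ ρ ∈ fwdDom ρmax, HasDerivWithinAt r (r ρ * N ρ) (fwdDom ρmax) ρ
  ode_N : ∀ ρ ∈ fwdDom ρmax,
      HasDerivWithinAt N (1 - (1 - w ρ ^ 2) ^ 2 / r ρ ^ 2 - κ ρ * N ρ) (fwdDom ρmax) ρ
  ode_w : ∀ ρ ∈ fwdDom ρmax, HasDerivWithinAt w (r ρ * U ρ) (fwdDom ρmax) ρ
  ode_U : ∀ ρ ∈ fwdDom ρmax,
      HasDerivWithinAt U (-(κ ρ - N ρ) * U ρ - w ρ * (1 - w ρ ^ 2) / r ρ) (fwdDom ρmax) ρ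
  ode_κ : ∀ ρ ∈ fwdDom ρmax, HasDerivWithinAt κ (1 + 2 * U ρ ^ 2 - κ ρ ^ 2) (fwdDom ρmax) ρ
  ode_ζ : ∀ ρ ∈ fwdDom ρmax, HasDerivWithinAt ζ (-(κ ρ) * ζ ρ) (fwdDom ρmax) ρ
  constraint : ∀ ρ ∈ fwdDom ρmax,
      ζ ρ ^ 2 = 1 + 2 * U ρ ^ 2 - (1 - w ρ ^ 2) ^ 2 / r ρ ^ 2 - 2 * κ ρ * N ρ + N ρ ^ 2

/-- A maximal forward solution: a solution on `[0, ρmax)` such that no solution with the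
same initial data exists on a strictly larger forward interval. -/
def IsMaximalShootingSol (r₀ w₀ U₀ : ℝ) (ρmax : EReal)
    (r N w U κ ζ : ℝ → ℝ) : Prop :=
  0 < ρmax ∧ IsShootingSolOn r₀ w₀ U₀ ρmax r N w U κ ζ ∧
    ∀ ρmax' : EReal, ρmax < ρmax' →
      ¬ ∃ r' N' w' U' κ' ζ' : ℝ → ℝ, IsShootingSolOn r₀ w₀ U₀ ρmax' r' N' w' U' κ' ζ'

/-- The set of zeros of `w` in `(0, ρmax)`. -/
def zerosOf (w : ℝ → ℝ) (ρmax : EReal) : Set ℝ :=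
  {ρ : ℝ | 0 < ρ ∧ (ρ : EReal) < ρmax ∧ w ρ = 0}

/-- Singular orbit: the solution exists only up to a finite point `ρm`, at which
`r → 0`, `N → −∞`, while `w, U, κ, ζ` remain bounded. -/
def SingularSol (ρmax : EReal) (r N w U κ ζ : ℝ → ℝ) : Prop :=
  ∃ ρm : ℝ, ρmax = (ρm : EReal) ∧ 0 < ρm ∧
    Tendsto r (𝓝[<] ρm) (𝓝 0) ∧ Tendsto N (𝓝[<] ρm) atBot ∧
    ∃ C : ℝ, ∀ ρ ∈ fwdDom ρmax, |w ρ| ≤ C ∧ |U ρ| ≤ C ∧ |κ ρ| ≤ C ∧ |ζ ρ| ≤ C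

/-- Escaping singular orbit: singular, `w` leaves the strip `|w| ≤ 1`, and `w` has
exactly `n` zeros for `ρ > 0`. -/
def EscapingSol (n : ℕ) (ρmax : EReal) (r N w U κ ζ : ℝ → ℝ) : Prop :=
  SingularSol ρmax r N w U κ ζ ∧ (∃ ρ ∈ fwdDom ρmax, 1 < |w ρ|) ∧
    (zerosOf w ρmax).Finite ∧ (zerosOf w ρmax).ncard = n

/-- Crashing singular orbit: singular with `|w| ≤ 1` on the whole domain. -/
def CrashingSol (ρmax : EReal) (r N w U κ ζ : ℝ → ℝ) : Prop :=
  SingularSol ρmax r N w U κ ζ ∧ ∀ ρ ∈ fwdDom ρmax, |w ρ| ≤ 1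

/-- Oscillatory orbit: global, with `(w, w') = (w, rU) → (0, 0)` as `ρ → ∞`. -/
def OscillatorySol (ρmax : EReal) (r N w U κ ζ : ℝ → ℝ) : Prop :=
  ρmax = ⊤ ∧ Tendsto w atTop (𝓝 0) ∧ Tendsto (fun ρ => r ρ * U ρ) atTop (𝓝 0)

/-- Regular orbit: global, with `(|w|, w') → (1, 0)` as `ρ → ∞`, and `w` has exactly
`n` zeros for `ρ > 0`. -/
def RegularSol (n : ℕ) (ρmax : EReal) (r N w U κ ζ : ℝ → ℝ) : Prop :=
  ρmax = ⊤ ∧ Tendsto (fun ρ => |w ρ|) atTop (𝓝 1) ∧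
    Tendsto (fun ρ => r ρ * U ρ) atTop (𝓝 0) ∧
    (zerosOf w ρmax).Finite ∧ (zerosOf w ρmax).ncard = n

/-- Initial data whose (unique) maximal orbit is escaping singular with `n` zeros of `w`. -/
def InE (n : ℕ) (r₀ w₀ U₀ : ℝ) : Prop :=
  Admissible r₀ w₀ U₀ ∧ ∃ (ρmax : EReal) (r N w U κ ζ : ℝ → ℝ),
    IsMaximalShootingSol r₀ w₀ U₀ ρmax r N w U κ ζ ∧ EscapingSol n ρmax r N w U κ ζ

/-- Initial data whose maximal orbit is crashing singular. -/
def InC (r₀ w₀ U₀ : ℝ) : Prop :=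
  Admissible r₀ w₀ U₀ ∧ ∃ (ρmax : EReal) (r N w U κ ζ : ℝ → ℝ),
    IsMaximalShootingSol r₀ w₀ U₀ ρmax r N w U κ ζ ∧ CrashingSol ρmax r N w U κ ζ

/-- Initial data whose maximal orbit is oscillatory. -/
def InO (r₀ w₀ U₀ : ℝ) : Prop :=
  Admissible r₀ w₀ U₀ ∧ ∃ (ρmax : EReal) (r N w U κ ζ : ℝ → ℝ),
    IsMaximalShootingSol r₀ w₀ U₀ ρmax r N w U κ ζ ∧ OscillatorySol ρmax r N w U κ ζ

/-- Initial data whose maximal orbit is regular with `n` zeros of `w`. -/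
def InR (n : ℕ) (r₀ w₀ U₀ : ℝ) : Prop :=
  Admissible r₀ w₀ U₀ ∧ ∃ (ρmax : EReal) (r N w U κ ζ : ℝ → ℝ),
    IsMaximalShootingSol r₀ w₀ U₀ ρmax r N w U κ ζ ∧ RegularSol n ρmax r N w U κ ζ


/-! Every inequality is a one-sided comparison: a function `f` with `f 0 ≥ 0` and `f' ≥ G f`
wherever `f < 0`, for some continuous `G`, stays nonnegative. This is applied in turn to
`κ - tanh` (Riccati equation for `κ`), `tanh - N`, `ζ`, `√E₀ sech - ζ`, and
`2 tanh + √E₀ sech - (κ + N)`; for the last one the constraint eliminates `(1 - w²)²/r²` from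
`κ' + N'`. Since `tanh < 1` this gives `κ + N ≤ 2 + √E₀ sech`. -/

namespace Real

theorem hasDerivAt_tanh (x : ℝ) : HasDerivAt tanh (1 - tanh x ^ 2) x := by
  have h := (hasDerivAt_sinh x).div (hasDerivAt_cosh x) (cosh_pos x).ne'
  rw [show (sinh / cosh : ℝ → ℝ) = tanh from funext fun y => (tanh_eq_sinh_div_cosh y).symm] at h
  refine h.congr_deriv ?_
  rw [tanh_eq_sinh_div_cosh]
  field_simp

theorem continuous_tanh : Continuous tanh :=
  continuous_iff_continuousAt.2 fun x => (hasDerivAt_tanh x).continuousAt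

theorem hasDerivAt_inv_cosh (x : ℝ) :
    HasDerivAt (fun y => (cosh y)⁻¹) (-(tanh x * (cosh x)⁻¹)) x := by
  refine ((hasDerivAt_cosh x).inv (cosh_pos x).ne').congr_deriv ?_
  rw [tanh_eq_sinh_div_cosh]
  field_simp

theorem tanh_nonneg {x : ℝ} (hx : 0 ≤ x) : 0 ≤ tanh x := by
  rw [tanh_eq_sinh_div_cosh]
  exact div_nonneg (sinh_nonneg_iff.2 hx) (cosh_pos x).le

end Real

theorem nonneg_of_mul_le_derivWithin_Icc {f f' : ℝ → ℝ} {a b M : ℝ}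
    (hf : ContinuousOn f (Icc a b))
    (hf' : ∀ x ∈ Ico a b, HasDerivWithinAt f (f' x) (Ici x) x) (ha : 0 ≤ f a)
    (bound : ∀ x ∈ Ico a b, f x < 0 → M * f x ≤ f' x) :
    ∀ x ∈ Icc a b, 0 ≤ f x := by
  intro x hx
  -- `-f` stays below every barrier `ε e^{(M+1)y}`: at a contact point
  -- `-f' ≤ M (-f) < (M+1) (-f)`.
  have below_barrier : ∀ ε > 0, -f x ≤ ε * exp ((M + 1) * x) := by
    intro ε hε
    have hB : ∀ y, HasDerivAt (fun y => ε * exp ((M + 1) * y))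
        (ε * (exp ((M + 1) * y) * ((M + 1) * 1))) y := fun y =>
      (((hasDerivAt_id y).const_mul (M + 1)).exp).const_mul ε
    refine image_le_of_deriv_right_lt_deriv_boundary' (f := fun y => -f y) hf.neg
      (fun y hy => (hf' y hy).neg) ?_ (by fun_prop) (fun y _ => (hB y).hasDerivWithinAt) ?_ hx
    · have := exp_pos ((M + 1) * a)
      nlinarith
    · intro y hy hcontact
      have hpos : 0 < ε * exp ((M + 1) * y) := by positivity
      have hslope := bound y hy (by linarith)
      rw [show f y = -(ε * exp ((M + 1) * y)) by linarith] at hslope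
      linarith
  by_contra! hneg
  have hexp := exp_pos ((M + 1) * x)
  have := below_barrier (-f x / (2 * exp ((M + 1) * x))) (div_pos (neg_pos.2 hneg) (by positivity))
  rw [div_mul_eq_mul_div, mul_div_mul_right _ _ hexp.ne'] at this
  linarith

theorem Icc_subset_fwdDom {ρmax : EReal} {b : ℝ} (hb : b ∈ fwdDom ρmax) :
    Icc 0 b ⊆ fwdDom ρmax := fun _ hx =>
  ⟨hx.1, lt_of_le_of_lt (EReal.coe_le_coe_iff.2 hx.2) hb.2⟩

theorem nonneg_of_mul_le_derivWithin_fwdDom {ρmax : EReal} {f f' G : ℝ → ℝ}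
    (hf : ∀ ρ ∈ fwdDom ρmax, HasDerivWithinAt f (f' ρ) (fwdDom ρmax) ρ)
    (hG : ContinuousOn G (fwdDom ρmax)) (h0 : 0 ≤ f 0)
    (bound : ∀ ρ ∈ fwdDom ρmax, f ρ < 0 → G ρ * f ρ ≤ f' ρ) :
    ∀ ρ ∈ fwdDom ρmax, 0 ≤ f ρ := by
  intro b hb
  have hsub := Icc_subset_fwdDom hb
  obtain ⟨M, hM⟩ := isCompact_Icc.exists_bound_of_continuousOn (hG.mono hsub)
  refine nonneg_of_mul_le_derivWithin_Icc (f' := f') (M := M)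
    (fun y hy => (hf y (hsub hy)).continuousWithinAt.mono hsub) (fun y hy => ?_) h0
    (fun y hy hneg => ?_) b (right_mem_Icc.2 hb.1)
  · exact (hf y (hsub (Ico_subset_Icc_self hy))).mono_of_mem_nhdsWithin <|
      mem_of_superset (Icc_mem_nhdsGE hy.2) fun z hz => hsub ⟨hy.1.trans hz.1, hz.2⟩
  · have hGM : G y ≤ M := (le_abs_self _).trans (hM y (Ico_subset_Icc_self hy))
    nlinarith [bound y (hsub (Ico_subset_Icc_self hy)) hneg]

namespace IsShootingSolOn

variable {r₀ w₀ U₀ : ℝ} {ρmax : EReal} {r N w U κ ζ : ℝ → ℝ}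

theorem continuousOn_κ (hs : IsShootingSolOn r₀ w₀ U₀ ρmax r N w U κ ζ) :
    ContinuousOn κ (fwdDom ρmax) := fun ρ hρ => (hs.ode_κ ρ hρ).continuousWithinAt

theorem tanh_le_κ (hs : IsShootingSolOn r₀ w₀ U₀ ρmax r N w U κ ζ) :
    ∀ ρ ∈ fwdDom ρmax, tanh ρ ≤ κ ρ := by
  have h := nonneg_of_mul_le_derivWithin_fwdDom (f := fun ρ => κ ρ - tanh ρ)
    (fun ρ hρ => (hs.ode_κ ρ hρ).sub (hasDerivAt_tanh ρ).hasDerivWithinAt)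
    (G := fun ρ => -(κ ρ + tanh ρ)) (hs.continuousOn_κ.add continuous_tanh.continuousOn).neg
    (by simp [hs.init_κ]) fun ρ _ _ => by linarith [sq_nonneg (U ρ)]
  exact fun ρ hρ => sub_nonneg.1 (h ρ hρ)

theorem N_le_tanh (hs : IsShootingSolOn r₀ w₀ U₀ ρmax r N w U κ ζ) :
    ∀ ρ ∈ fwdDom ρmax, N ρ ≤ tanh ρ := by
  have h := nonneg_of_mul_le_derivWithin_fwdDom (f := fun ρ => tanh ρ - N ρ)
    (fun ρ hρ => (hasDerivAt_tanh ρ).hasDerivWithinAt.sub (hs.ode_N ρ hρ))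
    (G := fun ρ => -κ ρ) hs.continuousOn_κ.neg (by simp [hs.init_N]) fun ρ hρ _ => by
      have hX : 0 ≤ (1 - w ρ ^ 2) ^ 2 / r ρ ^ 2 := by positivity
      nlinarith [mul_nonneg (tanh_nonneg hρ.1) (sub_nonneg.2 (hs.tanh_le_κ ρ hρ))]
  exact fun ρ hρ => sub_nonneg.1 (h ρ hρ)

theorem ζ_nonneg (hs : IsShootingSolOn r₀ w₀ U₀ ρmax r N w U κ ζ) :
    ∀ ρ ∈ fwdDom ρmax, 0 ≤ ζ ρ :=
  nonneg_of_mul_le_derivWithin_fwdDom hs.ode_ζ hs.continuousOn_κ.neg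
    (hs.init_ζ ▸ sqrt_nonneg _) fun _ _ _ => le_rfl

theorem ζ_le_sqrt_initialEnergy_mul_inv_cosh
    (hs : IsShootingSolOn r₀ w₀ U₀ ρmax r N w U κ ζ) :
    ∀ ρ ∈ fwdDom ρmax, ζ ρ ≤ √(initialEnergy r₀ w₀ U₀) * (cosh ρ)⁻¹ := by
  set c := √(initialEnergy r₀ w₀ U₀)
  have h := nonneg_of_mul_le_derivWithin_fwdDom (f := fun ρ => c * (cosh ρ)⁻¹ - ζ ρ)
    (fun ρ hρ => ((hasDerivAt_inv_cosh ρ).const_mul c).hasDerivWithinAt.sub (hs.ode_ζ ρ hρ))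
    (G := fun ρ => -κ ρ) hs.continuousOn_κ.neg (by simp [hs.init_ζ, c]) fun ρ hρ _ => by
      have hc : 0 ≤ c := sqrt_nonneg _
      have := mul_nonneg (mul_nonneg hc (inv_nonneg.2 (cosh_pos ρ).le))
        (sub_nonneg.2 (hs.tanh_le_κ ρ hρ))
      linarith
  exact fun ρ hρ => sub_nonneg.1 (h ρ hρ)

theorem κ_add_N_le (hs : IsShootingSolOn r₀ w₀ U₀ ρmax r N w U κ ζ) :
    ∀ ρ ∈ fwdDom ρmax, κ ρ + N ρ ≤ 2 * tanh ρ + √(initialEnergy r₀ w₀ U₀) * (cosh ρ)⁻¹ := by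
  set c := √(initialEnergy r₀ w₀ U₀)
  have h := nonneg_of_mul_le_derivWithin_fwdDom
    (f := fun ρ => 2 * tanh ρ + c * (cosh ρ)⁻¹ - (κ ρ + N ρ))
    (fun ρ hρ => ((((hasDerivAt_tanh ρ).const_mul 2).add
      ((hasDerivAt_inv_cosh ρ).const_mul c)).hasDerivWithinAt.sub
      ((hs.ode_κ ρ hρ).add (hs.ode_N ρ hρ))))
    (G := fun ρ => -tanh ρ) continuous_tanh.continuousOn.neg
    (by simp [hs.init_κ, hs.init_N, c]) fun ρ hρ hneg => by
      set t := tanh ρ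
      -- With `a = κ - t`, `b = t - N`, the constraint turns `f' + t f` into
      -- `1 - t² + a² + ab + b² - ζ²`, and `f < 0` forces `0 ≤ ζ < a - b`.
      have key :
          0 ≤ 1 - t ^ 2 + (κ ρ - t) ^ 2 + (κ ρ - t) * (t - N ρ) + (t - N ρ) ^ 2 - ζ ρ ^ 2 := by
        nlinarith [tanh_sq_lt_one ρ, hs.ζ_nonneg ρ hρ, hs.N_le_tanh ρ hρ,
          hs.ζ_le_sqrt_initialEnergy_mul_inv_cosh ρ hρ]
      linarith [hs.constraint ρ hρ]
  exact fun ρ hρ => by linarith [h ρ hρ]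

end IsShootingSolOn

theorem basic_inequalities_general (r₀ w₀ U₀ : ℝ)
    (ρmax : EReal) (r N w U κ ζ : ℝ → ℝ)
    (hsol : IsMaximalShootingSol r₀ w₀ U₀ ρmax r N w U κ ζ) :
    ∀ ρ ∈ fwdDom ρmax,
      Real.tanh ρ ≤ κ ρ ∧ N ρ ≤ Real.tanh ρ ∧
      0 ≤ ζ ρ ∧ ζ ρ ≤ Real.sqrt (initialEnergy r₀ w₀ U₀) * (Real.cosh ρ)⁻¹ ∧
      κ ρ + N ρ ≤ 2 + Real.sqrt (initialEnergy r₀ w₀ U₀) * (Real.cosh ρ)⁻¹ := by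
  obtain ⟨-, hs, -⟩ := hsol
  intro ρ hρ
  refine ⟨hs.tanh_le_κ ρ hρ, hs.N_le_tanh ρ hρ, hs.ζ_nonneg ρ hρ,
    hs.ζ_le_sqrt_initialEnergy_mul_inv_cosh ρ hρ, ?_⟩
  linarith [hs.κ_add_N_le ρ hρ, tanh_lt_one ρ]

/-- Basic inequalities: `κ ≥ tanh ρ ≥ N`, `0 ≤ ζ ≤ √E₀ sech ρ`,
and `κ + N ≤ 2 + √E₀ sech ρ` on the domain of existence. -/
theorem basic_inequalities (r₀ w₀ U₀ : ℝ) (hadm : Admissible r₀ w₀ U₀)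
    (ρmax : EReal) (r N w U κ ζ : ℝ → ℝ)
    (hsol : IsMaximalShootingSol r₀ w₀ U₀ ρmax r N w U κ ζ) :
    ∀ ρ ∈ fwdDom ρmax,
      Real.tanh ρ ≤ κ ρ ∧ N ρ ≤ Real.tanh ρ ∧
      0 ≤ ζ ρ ∧ ζ ρ ≤ Real.sqrt (initialEnergy r₀ w₀ U₀) * (Real.cosh ρ)⁻¹ ∧
      κ ρ + N ρ ≤ 2 + Real.sqrt (initialEnergy r₀ w₀ U₀) * (Real.cosh ρ)⁻¹ :=
  basic_inequalities_general r₀ w₀ U₀ ρmax r N w U κ ζ hsol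
end
end

section
/- Consider a maximal forward solution of the shooting system with admissible initial data that is defined for all ρ ≥ 0. Then liminf_{ρ→∞} κ(ρ) ≥ 1 and ζ(ρ) → 0 as ρ → ∞. If furthermore U(ρ) → 0 as ρ → ∞, then κ(ρ) → 1 as ρ → ∞. -/
open Filter Topology Set Real

noncomputable section

/-! Along a global solution `κ` solves the Riccati equation `κ' = 1 + 2U² − κ²`, whose forcing
`1 + 2U²` is at least `1`, so `κ` is pushed up towards `1` at an exponential rate, and down
towards `1` once `U → 0`. Once `κ > 1/2`, the linear equation `ζ' = −κζ` makes `ζ²`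
decay exponentially. Each bound comes from comparing with an explicit exponential barrier that
the solution can never touch. -/

lemma fwdDom_top : fwdDom ⊤ = Ici 0 := by
  ext ρ; simp [fwdDom, EReal.coe_lt_top]

theorem image_le_of_deriv_lt_deriv_boundary_Ici {f f' B B' : ℝ → ℝ} {a : ℝ}
    (hf : ∀ x ∈ Ici a, HasDerivWithinAt f (f' x) (Ici a) x)
    (hB : ∀ x, HasDerivAt B (B' x) x) (ha : f a ≤ B a)
    (bound : ∀ x, a ≤ x → f x = B x → f' x < B' x) :
    ∀ x, a ≤ x → f x ≤ B x := fun _ hx =>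
  image_le_of_deriv_right_lt_deriv_boundary
    (fun y hy => (hf y hy.1).continuousWithinAt.mono Icc_subset_Ici_self)
    (fun y hy => (hf y hy.1).mono (Ici_subset_Ici.2 hy.1)) ha hB
    (fun y hy => bound y hy.1) ⟨hx, le_rfl⟩

theorem tendsto_const_mul_exp_neg_mul_sub (C : ℝ) {c : ℝ} (hc : 0 < c) (a : ℝ) :
    Tendsto (fun x => C * exp (-(c * (x - a)))) atTop (𝓝 0) := by
  have : Tendsto (fun x => c * (x - a)) atTop atTop :=
    (tendsto_atTop_add_const_right _ (-a) tendsto_id).const_mul_atTop hc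
  simpa using (tendsto_exp_neg_atTop_nhds_zero.comp this).const_mul C

section Riccati

variable {κ κ' : ℝ → ℝ}

theorem one_sub_exp_le_of_one_sub_sq_le_deriv
    (hκ : ∀ x ∈ Ici (0 : ℝ), HasDerivWithinAt κ (κ' x) (Ici 0) x)
    (hκ' : ∀ x, 0 ≤ x → 1 - κ x ^ 2 ≤ κ' x) (h₀ : 0 ≤ κ 0) :
    ∀ x, 0 ≤ x → 1 - exp (-x / 2) ≤ κ x := by
  have hle := image_le_of_deriv_lt_deriv_boundary_Ici (f := fun x => -κ x)
    (B := fun x => exp (-x / 2) - 1) (fun x hx => (hκ x hx).neg)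
    (fun x => (((hasDerivAt_id x).neg.div_const 2).exp).sub_const 1) (by simpa using h₀) ?_
  · intro x hx
    linarith [hle x hx]
  · -- at a contact point `κ = 1 − e` with `e = exp (−x/2) ≤ 1`, so `κ' ≥ e (2 − e) ≥ e > e / 2`
    intro x hx hcontact
    have he₀ : 0 < exp (-x / 2) := exp_pos _
    have he₁ : exp (-x / 2) ≤ 1 := exp_le_one_iff.2 (by linarith)
    have hκx : κ x = 1 - exp (-x / 2) := by linarith
    have := hκ' x hx
    rw [hκx] at this
    show -κ' x < exp (-x / 2) * (-1 / 2)
    nlinarith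

theorem eventually_one_sub_lt_of_one_sub_sq_le_deriv
    (hκ : ∀ x ∈ Ici (0 : ℝ), HasDerivWithinAt κ (κ' x) (Ici 0) x)
    (hκ' : ∀ x, 0 ≤ x → 1 - κ x ^ 2 ≤ κ' x) (h₀ : 0 ≤ κ 0) :
    ∀ ε : ℝ, 0 < ε → ∀ᶠ x in atTop, 1 - ε < κ x := by
  intro ε hε
  have hexp : Tendsto (fun x => exp (-x / 2)) atTop (𝓝 0) :=
    (tendsto_exp_neg_atTop_nhds_zero.comp (tendsto_id.atTop_div_const two_pos)).congr
      fun x => by simp [neg_div]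
  filter_upwards [hexp.eventually_lt_const hε, eventually_ge_atTop 0] with x hexp hx
  linarith [one_sub_exp_le_of_one_sub_sq_le_deriv hκ hκ' h₀ x hx]

theorem eventually_lt_of_deriv_lt_sq_sub_sq {m : ℝ} (hm : 0 < m)
    (hκ : ∀ x ∈ Ici (0 : ℝ), HasDerivWithinAt κ (κ' x) (Ici 0) x)
    (hκ' : ∀ᶠ x in atTop, κ' x < m ^ 2 - κ x ^ 2) {η : ℝ} (hη : 0 < η) :
    ∀ᶠ x in atTop, κ x < m + η := by
  obtain ⟨a, ha⟩ := eventually_atTop.1 (hκ'.and (eventually_ge_atTop 0))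
  set C := |κ a - m|
  -- at a contact point `κ = m + D` with `D ≥ 0`, so `κ' < m² − (m + D)² ≤ −2mD`
  have hupper := image_le_of_deriv_lt_deriv_boundary_Ici (a := a)
    (B := fun x => m + C * exp (-(2 * m * (x - a))))
    (fun x hx => (hκ x (le_trans (ha a le_rfl).2 hx)).mono (Ici_subset_Ici.2 (ha a le_rfl).2))
    (fun x => ((((hasDerivAt_id x).sub_const a).const_mul (2 * m)).neg.exp.const_mul C).const_add m)
    (by simp [C, le_abs_self, le_add_of_sub_left_le]) ?_
  · filter_upwards [eventually_ge_atTop a,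
      (tendsto_const_mul_exp_neg_mul_sub C (c := 2 * m) (by positivity) a).eventually_lt_const hη]
      with x hx hsmall
    linarith [hupper x hx]
  · intro x hx hcontact
    have hD : 0 ≤ C * exp (-(2 * m * (x - a))) := by positivity
    have := (ha x hx).1
    rw [hcontact] at this
    show κ' x < C * (exp (-(2 * m * (x - a))) * -(2 * m * 1))
    nlinarith

end Riccati

theorem tendsto_zero_of_deriv_eq_neg_mul {ζ κ : ℝ → ℝ} {c : ℝ} (hc : 0 < c)
    (hζ : ∀ x ∈ Ici (0 : ℝ), HasDerivWithinAt ζ (-κ x * ζ x) (Ici 0) x)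
    (hκ : ∀ᶠ x in atTop, c < κ x) : Tendsto ζ atTop (𝓝 0) := by
  obtain ⟨a, ha⟩ := eventually_atTop.1 (hκ.and (eventually_ge_atTop 0))
  set C := ζ a ^ 2 + 1
  have hsq := image_le_of_deriv_lt_deriv_boundary_Ici (a := a) (f := fun x => ζ x ^ 2)
    (B := fun x => C * exp (-(2 * c * (x - a))))
    (fun x hx => ((hζ x (le_trans (ha a le_rfl).2 hx)).mono
      (Ici_subset_Ici.2 (ha a le_rfl).2)).pow 2)
    (fun x => (((hasDerivAt_id x).sub_const a).const_mul (2 * c)).neg.exp.const_mul C)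
    (by simp [C]) ?_
  · have hsq_tendsto : Tendsto (fun x => ζ x ^ 2) atTop (𝓝 0) :=
      squeeze_zero' (Eventually.of_forall fun x => sq_nonneg _)
        ((eventually_ge_atTop a).mono hsq) (tendsto_const_mul_exp_neg_mul_sub C (by positivity) a)
    rw [tendsto_zero_iff_abs_tendsto_zero]
    simpa [Function.comp_def, sqrt_sq_eq_abs] using (continuous_sqrt.tendsto 0).comp hsq_tendsto
  · intro x hx hcontact
    have hB : 0 < C * exp (-(2 * c * (x - a))) := by positivity
    have := (ha x hx).1
    show (2 : ℕ) * ζ x ^ (2 - 1) * (-κ x * ζ x) < C * (exp (-(2 * c * (x - a))) * -(2 * c * 1))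
    norm_num
    nlinarith

theorem kappa_liminf_and_zeta_limit_general (r₀ w₀ U₀ : ℝ)
    (ρmax : EReal) (r N w U κ ζ : ℝ → ℝ)
    (hsol : IsMaximalShootingSol r₀ w₀ U₀ ρmax r N w U κ ζ)
    (hglob : ρmax = ⊤) :
    (∀ ε : ℝ, 0 < ε → ∀ᶠ ρ in atTop, 1 - ε < κ ρ) ∧
    Tendsto ζ atTop (𝓝 0) ∧
    (Tendsto U atTop (𝓝 0) → Tendsto κ atTop (𝓝 1)) := by
  subst hglob
  obtain ⟨-, hS, -⟩ := hsol
  have hκ := hS.ode_κ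
  have hζ := hS.ode_ζ
  rw [fwdDom_top] at hκ hζ
  have hliminf := eventually_one_sub_lt_of_one_sub_sq_le_deriv hκ
    (fun x _ => by nlinarith [sq_nonneg (U x)]) hS.init_κ.ge
  refine ⟨hliminf, tendsto_zero_of_deriv_eq_neg_mul one_half_pos hζ
    ((hliminf _ one_half_pos).mono fun x hx => by linarith),
    fun hU => tendsto_order.2 ⟨fun a ha => ?_, fun b hb => ?_⟩⟩
  · simpa using hliminf (1 - a) (by linarith)
  · have hU2 : ∀ᶠ x in atTop, 2 * U x ^ 2 < b - 1 :=
      ((hU.pow 2).const_mul 2).eventually_lt_const (by simpa using hb)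
    have hupper := eventually_lt_of_deriv_lt_sq_sub_sq (m := 1 + (b - 1) / 2) (by linarith) hκ
      (hU2.mono fun x hx => by nlinarith) (half_pos (sub_pos.2 hb))
    filter_upwards [hupper] with x hx
    linarith

/-- If the solution is global, then `liminf κ ≥ 1` and `ζ → 0` at infinity;
if moreover `U → 0`, then `κ → 1`. -/
theorem kappa_liminf_and_zeta_limit (r₀ w₀ U₀ : ℝ) (hadm : Admissible r₀ w₀ U₀)
    (ρmax : EReal) (r N w U κ ζ : ℝ → ℝ)
    (hsol : IsMaximalShootingSol r₀ w₀ U₀ ρmax r N w U κ ζ)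
    (hglob : ρmax = ⊤) :
    (∀ ε : ℝ, 0 < ε → ∀ᶠ ρ in atTop, 1 - ε < κ ρ) ∧
    Tendsto ζ atTop (𝓝 0) ∧
    (Tendsto U atTop (𝓝 0) → Tendsto κ atTop (𝓝 1)) :=
  kappa_liminf_and_zeta_limit_general r₀ w₀ U₀ ρmax r N w U κ ζ hsol hglob
end
end

section
/- Consider a maximal forward solution of the shooting system with admissible initial data, defined at least on 0 ≤ ρ < ρ̄ for some finite ρ̄ > 0, and suppose N remains bounded on [0, ρ̄). Then all the dependent variables r, N, w, U, κ, ζ remain bounded on [0, ρ̄), r remains bounded away from 0, and the solution can be continued beyond ρ̄ (i.e. ρ_max > ρ̄). -/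
open Filter Topology Set Real

noncomputable section

/-!
Once `|N| ≤ C`, the equation `r' = rN` keeps `log r` within `C ρ̄` of `log r₀`. A barrier
argument gives `κ ≥ 0`, so `ζ²` decreases, and with the constraint `κ + N` is bounded above,
hence so is `κ`. The constraint then bounds `2U² - (1 - w²)²/r²`, which makes
`±w + (R/4) N`, with `R` an upper bound for `r`, grow at most linearly; this bounds `w`,
then `U`. So the orbit stays in a compact
set where `r` is bounded away from `0` and the vector field is `C¹`: it has a limit at `ρ̄`,
Picard–Lindelöf continues it past `ρ̄`, and the constraint survives on the continuation because
its defect `χ` solves the linear equation `χ' = -2κχ` with `χ(0) = 0`.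
-/

section Calculus

variable {E F : Type*} [NormedAddCommGroup E] [NormedSpace ℝ E]
  [NormedAddCommGroup F] [NormedSpace ℝ F]

theorem HasDerivWithinAt.fst {f : ℝ → E × F} {v : E × F} {s : Set ℝ} {t : ℝ}
    (h : HasDerivWithinAt f v s t) : HasDerivWithinAt (fun x => (f x).1) v.1 s t :=
  (ContinuousLinearMap.fst ℝ E F).hasFDerivAt.comp_hasDerivWithinAt t h

theorem HasDerivWithinAt.snd {f : ℝ → E × F} {v : E × F} {s : Set ℝ} {t : ℝ}
    (h : HasDerivWithinAt f v s t) : HasDerivWithinAt (fun x => (f x).2) v.2 s t :=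
  (ContinuousLinearMap.snd ℝ E F).hasFDerivAt.comp_hasDerivWithinAt t h

variable {a b c : ℝ}

theorem HasDerivWithinAt.Ici_of_Ico {f : ℝ → E} {f' : E} {t : ℝ} (ht : t ∈ Ico a b)
    (h : HasDerivWithinAt f f' (Ico a b) t) : HasDerivWithinAt f f' (Ici t) t :=
  h.mono_of_mem_nhdsWithin (mem_nhdsWithin.2 ⟨Iio b, isOpen_Iio, ht.2,
    fun _ hx => ⟨ht.1.trans hx.2, hx.1⟩⟩)

theorem antitoneOn_Ico_of_hasDerivWithinAt_nonpos {f f' : ℝ → ℝ}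
    (hf : ∀ t ∈ Ico a b, HasDerivWithinAt f (f' t) (Ico a b) t) (hf' : ∀ t ∈ Ico a b, f' t ≤ 0) :
    AntitoneOn f (Ico a b) := by
  refine antitoneOn_of_hasDerivWithinAt_nonpos (f' := f') (convex_Ico a b)
    (fun t ht => (hf t ht).continuousWithinAt) (fun t ht => ?_) (fun t ht => ?_)
  · rw [interior_Ico] at ht ⊢
    exact (hf t (Ioo_subset_Ico_self ht)).mono Ioo_subset_Ico_self
  · rw [interior_Ico] at ht
    exact hf' t (Ioo_subset_Ico_self ht)

theorem le_of_hasDerivWithinAt_Ico_of_deriv_neg_of_eq {f f' : ℝ → ℝ} {M : ℝ}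
    (hf : ∀ t ∈ Ico a b, HasDerivWithinAt f (f' t) (Ico a b) t) (ha : f a ≤ M)
    (hM : ∀ t ∈ Ico a b, f t = M → f' t < 0) : ∀ t ∈ Ico a b, f t ≤ M := by
  intro t ht
  have hsub : Icc a t ⊆ Ico a b := Icc_subset_Ico_right ht.2
  refine image_le_of_deriv_right_lt_deriv_boundary (B := fun _ => M) (B' := 0)
    (fun x hx => (hf x (hsub hx)).continuousWithinAt.mono hsub)
    (fun x hx => (hf x (hsub (Ico_subset_Icc_self hx))).Ici_of_Ico (hsub (Ico_subset_Icc_self hx)))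
    ha (fun _ => hasDerivAt_const _ _)
    (fun x hx => hM x (hsub (Ico_subset_Icc_self hx))) ⟨ht.1, le_rfl⟩

theorem exists_tendsto_nhdsLT_of_norm_deriv_le [CompleteSpace E] {f f' : ℝ → E} {M : ℝ}
    (hab : a < b) (hf : ∀ t ∈ Ico a b, HasDerivWithinAt f (f' t) (Ico a b) t)
    (hM : ∀ t ∈ Ico a b, ‖f' t‖ ≤ M) : ∃ L, Tendsto f (𝓝[<] b) (𝓝 L) := by
  have hlip : ∀ x ∈ Ico a b, ∀ y ∈ Ico a b, dist (f x) (f y) ≤ M * dist x y :=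
    fun x hx y hy => by
      simpa only [dist_eq_norm] using
        (convex_Ico a b).norm_image_sub_le_of_norm_hasDerivWithin_le hf hM hy hx
  refine cauchy_map_iff_exists_tendsto.1 (Metric.cauchy_iff.2 ⟨inferInstance, fun ε hε => ?_⟩)
  set δ := ε / (|M| + 1)
  have hδ : 0 < δ := by positivity
  refine ⟨f '' Ioo (max a (b - δ)) b,
    image_mem_map (Ioo_mem_nhdsLT (max_lt hab (by linarith))), ?_⟩
  rintro _ ⟨x, hx, rfl⟩ _ ⟨y, hy, rfl⟩
  have hxy : dist x y < δ := by
    rw [Real.dist_eq, abs_lt]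
    constructor <;> linarith [le_max_right a (b - δ), hx.1, hx.2, hy.1, hy.2]
  calc dist (f x) (f y) ≤ M * dist x y :=
        hlip x ⟨(le_max_left _ _).trans hx.1.le, hx.2⟩ y ⟨(le_max_left _ _).trans hy.1.le, hy.2⟩
    _ ≤ |M| * δ := mul_le_mul (le_abs_self M) hxy.le dist_nonneg (abs_nonneg M)
    _ < (|M| + 1) * δ := by linarith
    _ = ε := by simp only [δ]; field_simp

theorem hasDerivWithinAt_Ico_ite {f f' g g' : ℝ → E} (hab : a < b)
    (hf : ∀ t ∈ Ico a b, HasDerivWithinAt f (f' t) (Ico a b) t)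
    (hg : ∀ t ∈ Ico b c, HasDerivAt g (g' t) t)
    (hfg : Tendsto f (𝓝[<] b) (𝓝 (g b))) (hfg' : Tendsto f' (𝓝[<] b) (𝓝 (g' b))) :
    ∀ t ∈ Ico a c, HasDerivWithinAt (fun s => if s < b then f s else g s)
      (if t < b then f' t else g' t) (Ico a c) t := by
  set h := fun s => if s < b then f s else g s
  have hhf : ∀ t ∈ Ioo a b, HasDerivAt h (f' t) t := fun t ht =>
    ((hf t (Ioo_subset_Ico_self ht)).hasDerivAt (Ico_mem_nhds ht.1 ht.2)).congr_of_eventuallyEq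
      (by filter_upwards [Iio_mem_nhds ht.2] with s hs using if_pos hs)
  intro t ht
  rcases lt_trichotomy t b with htb | rfl | hbt
  · rw [if_pos htb]
    have hIco : Ico a b ∈ 𝓝[Ico a c] t := mem_of_superset
      (inter_mem_nhdsWithin _ (Iio_mem_nhds htb)) fun x hx => ⟨hx.1.1, hx.2⟩
    exact ((hf t ⟨ht.1, htb⟩).congr (fun x hx => if_pos hx.2) (if_pos htb)).mono_of_mem_nhdsWithin
      hIco
  · rw [if_neg (lt_irrefl t)]
    have hleft : HasDerivWithinAt h (g' t) (Iic t) t := by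
      refine hasDerivWithinAt_Iic_of_tendsto_deriv
        (fun x hx => (hhf x hx).differentiableAt.differentiableWithinAt) ?_ (Ioo_mem_nhdsLT hab) ?_
      · show Tendsto h _ (𝓝 (h t))
        rw [show h t = g t from if_neg (lt_irrefl t)]
        refine (hfg.mono_left (nhdsWithin_mono _ Ioo_subset_Iio_self)).congr' ?_
        filter_upwards [self_mem_nhdsWithin] with x hx using (if_pos hx.2).symm
      · refine hfg'.congr' ?_
        filter_upwards [Ioo_mem_nhdsLT hab] with x hx using ((hhf x hx).deriv).symm
    have hright : HasDerivWithinAt h (g' t) (Ici t) t :=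
      (hg t ⟨le_rfl, ht.2⟩).hasDerivWithinAt.congr (fun x hx => if_neg (not_lt.2 hx))
        (if_neg (lt_irrefl t))
    exact (hleft.union hright).mono fun x _ => le_total x t
  · rw [if_neg (not_lt.2 hbt.le)]
    refine ((hg t ⟨hbt.le, ht.2⟩).congr_of_eventuallyEq ?_).hasDerivWithinAt
    filter_upwards [Ioi_mem_nhds hbt] with s hs using if_neg (not_lt.2 (le_of_lt hs))

theorem eq_zero_of_hasDerivWithinAt_Ico_eq_smul {f : ℝ → E} {g : ℝ → ℝ}
    (hf : ∀ t ∈ Ico a b, HasDerivWithinAt f (g t • f t) (Ico a b) t)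
    (hg : ContinuousOn g (Ico a b)) (ha : f a = 0) : ∀ t ∈ Ico a b, f t = 0 := by
  intro t ht
  have hsub : Icc a t ⊆ Ico a b := Icc_subset_Ico_right ht.2
  obtain ⟨K, hK⟩ := isCompact_Icc.exists_bound_of_continuousOn (hg.mono hsub)
  refine eq_zero_of_abs_deriv_le_mul_abs_self_of_eq_zero_right (K := K)
    (fun x hx => (hf x (hsub hx)).continuousWithinAt.mono hsub)
    (fun x hx => (hf x (hsub (Ico_subset_Icc_self hx))).Ici_of_Ico (hsub (Ico_subset_Icc_self hx)))
    ha (fun x hx => ?_) t ⟨ht.1, le_rfl⟩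
  rw [norm_smul]
  exact mul_le_mul_of_nonneg_right (hK x (Ico_subset_Icc_self hx)) (norm_nonneg _)

theorem exists_extension_of_mem_compact [CompleteSpace E] {v : E → E} {U K : Set E}
    (hU : IsOpen U) (hv : ∀ x ∈ U, ContDiffAt ℝ 1 v x) (hK : IsCompact K) (hKU : K ⊆ U)
    {γ : ℝ → E} (hab : a < b) (hγ : ∀ t ∈ Ico a b, HasDerivWithinAt γ (v (γ t)) (Ico a b) t)
    (hγK : ∀ t ∈ Ico a b, γ t ∈ K) :
    ∃ c, b < c ∧ ∃ γ' : ℝ → E, EqOn γ' γ (Ico a b) ∧ (∀ t ∈ Ico a c, γ' t ∈ U) ∧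
      ∀ t ∈ Ico a c, HasDerivWithinAt γ' (v (γ' t)) (Ico a c) t := by
  obtain ⟨M, hM⟩ := hK.exists_bound_of_continuousOn
    fun x hx => (hv x (hKU hx)).continuousAt.continuousWithinAt
  obtain ⟨L, hL⟩ := exists_tendsto_nhdsLT_of_norm_deriv_le hab hγ fun t ht => hM _ (hγK t ht)
  have hLK : L ∈ K := hK.isClosed.mem_of_tendsto hL <| by
    filter_upwards [Ioo_mem_nhdsLT hab] with t ht using hγK t (Ioo_subset_Ico_self ht)
  obtain ⟨α, hαb, ε, hε, hα⟩ :=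
    (hv L (hKU hLK)).exists_forall_mem_closedBall_exists_eq_forall_mem_Ioo_hasDerivAt₀ b
  obtain ⟨δ, hδ, hαU⟩ := Metric.eventually_nhds_iff.1 <|
    (hα b ⟨by linarith, by linarith⟩).continuousAt.preimage_mem_nhds
      (hU.mem_nhds (hαb ▸ hKU hLK))
  have hc : b < b + min ε δ / 2 := by linarith [lt_min hε hδ]
  have hαε : ∀ t ∈ Ico b (b + min ε δ / 2), t ∈ Ioo (b - ε) (b + ε) := fun t ht =>
    ⟨by linarith [ht.1], by linarith [ht.2, min_le_left ε δ]⟩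
  have hαδ : ∀ t ∈ Ico b (b + min ε δ / 2), dist t b < δ := fun t ht => by
    rw [Real.dist_eq, abs_lt]; constructor <;> linarith [ht.1, ht.2, min_le_right ε δ]
  refine ⟨_, hc, fun t => if t < b then γ t else α t, fun t ht => if_pos ht.2, ?_, ?_⟩
  · intro t ht
    by_cases htb : t < b
    · simpa only [if_pos htb] using hKU (hγK t ⟨ht.1, htb⟩)
    · simpa only [if_neg htb] using hαU (hαδ t ⟨not_lt.1 htb, ht.2⟩)
  · intro t ht
    have hglue := hasDerivWithinAt_Ico_ite hab hγ (fun t ht => hα t (hαε t ht))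
      (hαb ▸ hL) (hαb ▸ (hv L (hKU hLK)).continuousAt.tendsto.comp hL) t ht
    rwa [← apply_ite v] at hglue

end Calculus

def shootingField : ℝ × ℝ × ℝ × ℝ × ℝ × ℝ → ℝ × ℝ × ℝ × ℝ × ℝ × ℝ
  | (r, N, w, U, κ, ζ) => (r * N, 1 - (1 - w ^ 2) ^ 2 / r ^ 2 - κ * N, r * U,
      -(κ - N) * U - w * (1 - w ^ 2) / r, 1 + 2 * U ^ 2 - κ ^ 2, -κ * ζ)

def constraintDefect : ℝ × ℝ × ℝ × ℝ × ℝ × ℝ → ℝ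
  | (r, N, w, U, κ, ζ) => ζ ^ 2 - (1 + 2 * U ^ 2 - (1 - w ^ 2) ^ 2 / r ^ 2 - 2 * κ * N + N ^ 2)

theorem shootingField_contDiffAt {p : ℝ × ℝ × ℝ × ℝ × ℝ × ℝ} (hp : p.1 ≠ 0) :
    ContDiffAt ℝ 1 shootingField p := by
  change ContDiffAt ℝ 1 (fun p : ℝ × ℝ × ℝ × ℝ × ℝ × ℝ => (p.1 * p.2.1,
    1 - (1 - p.2.2.1 ^ 2) ^ 2 / p.1 ^ 2 - p.2.2.2.2.1 * p.2.1, p.1 * p.2.2.2.1,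
    -(p.2.2.2.2.1 - p.2.1) * p.2.2.2.1 - p.2.2.1 * (1 - p.2.2.1 ^ 2) / p.1,
    1 + 2 * p.2.2.2.1 ^ 2 - p.2.2.2.2.1 ^ 2, -p.2.2.2.2.1 * p.2.2.2.2.2)) p
  fun_prop (disch := positivity)

section ShootingCurve

variable {r N w U κ ζ : ℝ → ℝ} {s : Set ℝ} {t : ℝ}

theorem hasDerivWithinAt_shootingField_iff :
    HasDerivWithinAt (fun x => (r x, N x, w x, U x, κ x, ζ x))
        (shootingField (r t, N t, w t, U t, κ t, ζ t)) s t ↔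
      HasDerivWithinAt r (r t * N t) s t ∧
      HasDerivWithinAt N (1 - (1 - w t ^ 2) ^ 2 / r t ^ 2 - κ t * N t) s t ∧
      HasDerivWithinAt w (r t * U t) s t ∧
      HasDerivWithinAt U (-(κ t - N t) * U t - w t * (1 - w t ^ 2) / r t) s t ∧
      HasDerivWithinAt κ (1 + 2 * U t ^ 2 - κ t ^ 2) s t ∧
      HasDerivWithinAt ζ (-(κ t) * ζ t) s t :=
  ⟨fun h => ⟨h.fst, h.snd.fst, h.snd.snd.fst, h.snd.snd.snd.fst, h.snd.snd.snd.snd.fst,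
      h.snd.snd.snd.snd.snd⟩,
    fun ⟨hr, hN, hw, hU, hκ, hζ⟩ => hr.prodMk (hN.prodMk (hw.prodMk (hU.prodMk (hκ.prodMk hζ))))⟩

theorem hasDerivWithinAt_constraintDefect
    (h : HasDerivWithinAt (fun x => (r x, N x, w x, U x, κ x, ζ x))
      (shootingField (r t, N t, w t, U t, κ t, ζ t)) s t) (hr : r t ≠ 0) :
    HasDerivWithinAt (fun x => constraintDefect (r x, N x, w x, U x, κ x, ζ x))
      (-2 * κ t * constraintDefect (r t, N t, w t, U t, κ t, ζ t)) s t := by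
  obtain ⟨hr', hN', hw', hU', hκ', hζ'⟩ := hasDerivWithinAt_shootingField_iff.1 h
  have hQ := ((hw'.pow 2).const_sub 1).pow 2 |>.div (hr'.pow 2) (pow_ne_zero 2 hr)
  refine ((hζ'.pow 2).sub (((((hU'.pow 2).const_mul 2).const_add 1).sub hQ).sub
    ((hκ'.const_mul 2).mul hN') |>.add (hN'.pow 2))).congr_deriv ?_
  simp only [constraintDefect, Pi.pow_apply]
  field_simp
  ring

end ShootingCurve

theorem fwdDom_coe (b : ℝ) : fwdDom b = Ico 0 b := by
  ext t
  simp [fwdDom]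

section ShootingSolution

variable {r₀ w₀ U₀ : ℝ} {r N w U κ ζ : ℝ → ℝ}

theorem IsShootingSolOn.mono {ρ ρ' : EReal} (hs : IsShootingSolOn r₀ w₀ U₀ ρ r N w U κ ζ)
    (h : ρ' ≤ ρ) : IsShootingSolOn r₀ w₀ U₀ ρ' r N w U κ ζ :=
  have hsub : fwdDom ρ' ⊆ fwdDom ρ := fun _ ht => ⟨ht.1, ht.2.trans_le h⟩
  { hs with
    r_pos := fun t ht => hs.r_pos t (hsub ht)
    ode_r := fun t ht => (hs.ode_r t (hsub ht)).mono hsub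
    ode_N := fun t ht => (hs.ode_N t (hsub ht)).mono hsub
    ode_w := fun t ht => (hs.ode_w t (hsub ht)).mono hsub
    ode_U := fun t ht => (hs.ode_U t (hsub ht)).mono hsub
    ode_κ := fun t ht => (hs.ode_κ t (hsub ht)).mono hsub
    ode_ζ := fun t ht => (hs.ode_ζ t (hsub ht)).mono hsub
    constraint := fun t ht => hs.constraint t (hsub ht) }

variable {b C : ℝ}

theorem IsShootingSolOn.init_r_pos (hs : IsShootingSolOn r₀ w₀ U₀ b r N w U κ ζ) (hb : 0 < b) :
    0 < r₀ :=
  hs.init_r ▸ hs.r_pos 0 (by rw [fwdDom_coe]; exact ⟨le_rfl, hb⟩)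

theorem IsShootingSolOn.kappa_nonneg (hs : IsShootingSolOn r₀ w₀ U₀ b r N w U κ ζ) :
    ∀ t ∈ Ico 0 b, 0 ≤ κ t := by
  have hκ : ∀ t ∈ Ico 0 b, HasDerivWithinAt κ (1 + 2 * U t ^ 2 - κ t ^ 2) (Ico 0 b) t := by
    simpa only [fwdDom_coe] using hs.ode_κ
  intro t ht
  have := le_of_hasDerivWithinAt_Ico_of_deriv_neg_of_eq (f := fun t => -κ t) (M := 0)
    (fun t ht => (hκ t ht).neg) (by simp [hs.init_κ])
    (fun t _ h0 => by nlinarith [sq_nonneg (U t)]) t ht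
  linarith

theorem IsShootingSolOn.zeta_sq_le (hs : IsShootingSolOn r₀ w₀ U₀ b r N w U κ ζ) :
    ∀ t ∈ Ico 0 b, ζ t ^ 2 ≤ ζ 0 ^ 2 := by
  have hζ : ∀ t ∈ Ico 0 b, HasDerivWithinAt ζ (-κ t * ζ t) (Ico 0 b) t := by
    simpa only [fwdDom_coe] using hs.ode_ζ
  intro t ht
  refine antitoneOn_Ico_of_hasDerivWithinAt_nonpos (fun t ht => (hζ t ht).pow 2)
    (fun t ht => ?_) ⟨le_rfl, ht.1.trans_lt ht.2⟩ ht ht.1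
  have := mul_nonneg (hs.kappa_nonneg t ht) (sq_nonneg (ζ t))
  simp only [Nat.cast_ofNat, Nat.add_one_sub_one, pow_one]
  nlinarith

theorem IsShootingSolOn.kappa_add_N_le (hs : IsShootingSolOn r₀ w₀ U₀ b r N w U κ ζ) :
    ∀ t ∈ Ico 0 b, κ t + N t ≤ 2 * √(1 + ζ 0 ^ 2) + 1 := by
  have hκ : ∀ t ∈ Ico 0 b, HasDerivWithinAt κ (1 + 2 * U t ^ 2 - κ t ^ 2) (Ico 0 b) t := by
    simpa only [fwdDom_coe] using hs.ode_κ
  have hN : ∀ t ∈ Ico 0 b,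
      HasDerivWithinAt N (1 - (1 - w t ^ 2) ^ 2 / r t ^ 2 - κ t * N t) (Ico 0 b) t := by
    simpa only [fwdDom_coe] using hs.ode_N
  have hsqrt := Real.sq_sqrt (by positivity : (0 : ℝ) ≤ 1 + ζ 0 ^ 2)
  have hsqrt₀ := Real.sqrt_nonneg (1 + ζ 0 ^ 2)
  refine le_of_hasDerivWithinAt_Ico_of_deriv_neg_of_eq (fun t ht => (hκ t ht).add (hN t ht))
    (by simp only [hs.init_κ, hs.init_N]; linarith) fun t ht hM => ?_
  -- by the constraint, `(κ + N)' = 1 + ζ² - (κ² - κN + N²)`, and `κ² - κN + N² ≥ (κ + N)² / 4`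
  have hcon := hs.constraint t (by rwa [fwdDom_coe])
  have hζ := hs.zeta_sq_le t ht
  nlinarith [sq_nonneg (κ t - N t)]

theorem IsShootingSolOn.r_mem_Icc (hs : IsShootingSolOn r₀ w₀ U₀ b r N w U κ ζ)
    (hN : ∀ t ∈ Ico 0 b, |N t| ≤ C) :
    ∀ t ∈ Ico 0 b, r t ∈ Icc (r₀ * exp (-(C * b))) (r₀ * exp (C * b)) := by
  have hr : ∀ t ∈ Ico 0 b, HasDerivWithinAt r (r t * N t) (Ico 0 b) t := by
    simpa only [fwdDom_coe] using hs.ode_r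
  have hpos : ∀ t ∈ Ico 0 b, 0 < r t := fun t ht => hs.r_pos t (by rwa [fwdDom_coe])
  have hlog : ∀ t ∈ Ico 0 b, HasDerivWithinAt (fun x => log (r x)) (N t) (Ico 0 b) t :=
    fun t ht => by simpa [(hpos t ht).ne'] using (hr t ht).log (hpos t ht).ne'
  intro t ht
  have h0 : (0 : ℝ) ∈ Ico 0 b := ⟨le_rfl, ht.1.trans_lt ht.2⟩
  have hdiff := (convex_Ico 0 b).norm_image_sub_le_of_norm_hasDerivWithin_le hlog hN h0 ht
  have hCb : C * t ≤ C * b := mul_le_mul_of_nonneg_left ht.2.le ((abs_nonneg _).trans (hN 0 h0))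
  rw [Real.norm_eq_abs, Real.norm_eq_abs, sub_zero, abs_of_nonneg ht.1, hs.init_r, abs_le] at hdiff
  have hr₀ := hs.init_r_pos (ht.1.trans_lt ht.2)
  rw [← exp_log (hpos t ht), ← exp_log hr₀, ← exp_add, ← exp_add]
  exact ⟨exp_le_exp.2 (by linarith), exp_le_exp.2 (by linarith)⟩

theorem IsShootingSolOn.kappa_le (hs : IsShootingSolOn r₀ w₀ U₀ b r N w U κ ζ)
    (hN : ∀ t ∈ Ico 0 b, |N t| ≤ C) : ∀ t ∈ Ico 0 b, κ t ≤ 2 * √(1 + ζ 0 ^ 2) + 1 + C :=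
  fun t ht => by linarith [hs.kappa_add_N_le t ht, (abs_le.1 (hN t ht)).1]

theorem IsShootingSolOn.abs_kappa_mul_N_le (hs : IsShootingSolOn r₀ w₀ U₀ b r N w U κ ζ)
    (hN : ∀ t ∈ Ico 0 b, |N t| ≤ C) :
    ∀ t ∈ Ico 0 b, |κ t * N t| ≤ (2 * √(1 + ζ 0 ^ 2) + 1 + C) * C := by
  intro t ht
  have hκ := hs.kappa_nonneg t ht
  rw [abs_mul, abs_of_nonneg hκ]
  exact mul_le_mul (hs.kappa_le hN t ht) (hN t ht) (abs_nonneg _) (hκ.trans (hs.kappa_le hN t ht))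

theorem IsShootingSolOn.two_mul_U_sq_sub_le (hs : IsShootingSolOn r₀ w₀ U₀ b r N w U κ ζ)
    (hN : ∀ t ∈ Ico 0 b, |N t| ≤ C) : ∀ t ∈ Ico 0 b, 2 * U t ^ 2 - (1 - w t ^ 2) ^ 2 / r t ^ 2 ≤
      ζ 0 ^ 2 + 2 * (2 * √(1 + ζ 0 ^ 2) + 1 + C) * C := by
  intro t ht
  have hcon := hs.constraint t (by rwa [fwdDom_coe])
  have hκN := (le_abs_self _).trans (hs.abs_kappa_mul_N_le hN t ht)
  nlinarith [hs.zeta_sq_le t ht, sq_nonneg (N t)]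

theorem IsShootingSolOn.exists_abs_w_le (hs : IsShootingSolOn r₀ w₀ U₀ b r N w U κ ζ)
    (hN : ∀ t ∈ Ico 0 b, |N t| ≤ C) : ∃ W, ∀ t ∈ Ico 0 b, |w t| ≤ W := by
  have hw : ∀ t ∈ Ico 0 b, HasDerivWithinAt w (r t * U t) (Ico 0 b) t := by
    simpa only [fwdDom_coe] using hs.ode_w
  have hN' : ∀ t ∈ Ico 0 b,
      HasDerivWithinAt N (1 - (1 - w t ^ 2) ^ 2 / r t ^ 2 - κ t * N t) (Ico 0 b) t := by
    simpa only [fwdDom_coe] using hs.ode_N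
  obtain ⟨R, hR⟩ : ∃ R, ∀ t ∈ Ico 0 b, 0 < r t ∧ r t ≤ R :=
    ⟨_, fun t ht => ⟨hs.r_pos t (by rwa [fwdDom_coe]), (hs.r_mem_Icc hN t ht).2⟩⟩
  obtain ⟨A, hA⟩ : ∃ A, ∀ t ∈ Ico 0 b, 2 * U t ^ 2 - (1 - w t ^ 2) ^ 2 / r t ^ 2 ≤ A :=
    ⟨_, hs.two_mul_U_sq_sub_le hN⟩
  obtain ⟨B, hB⟩ : ∃ B, ∀ t ∈ Ico 0 b, -(κ t * N t) ≤ B :=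
    ⟨_, fun t ht => (neg_le_abs _).trans (hs.abs_kappa_mul_N_le hN t ht)⟩
  -- in `(±w + R/4 · N)'` the term `-R/4 · Q` from `N'` cancels the `Q` in `2U² ≤ Q + A`
  have hderiv : ∀ σ : ℝ, σ ^ 2 = 1 → ∀ t ∈ Ico 0 b,
      σ * (r t * U t) + R / 4 * (1 - (1 - w t ^ 2) ^ 2 / r t ^ 2 - κ t * N t) ≤
        R * (3 + A + B) / 4 := by
    intro σ hσ t ht
    obtain ⟨hpos, hrR⟩ := hR t ht
    have hσU : σ * U t ≤ (1 + U t ^ 2) / 2 := by nlinarith [sq_nonneg (U t - σ)]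
    have hrU : σ * (r t * U t) ≤ R * (1 + U t ^ 2) / 2 := by
      nlinarith [mul_le_mul_of_nonneg_left hσU hpos.le,
        mul_le_mul_of_nonneg_right hrR (by positivity : (0 : ℝ) ≤ 1 + U t ^ 2)]
    have hR4 : 0 ≤ R / 4 := by linarith
    nlinarith [mul_le_mul_of_nonneg_left (hA t ht) hR4, mul_le_mul_of_nonneg_left (hB t ht) hR4]
  set c := R * (3 + A + B) / 4
  have hσw : ∀ σ : ℝ, σ ^ 2 = 1 → ∀ t ∈ Ico 0 b, σ * w t ≤ |w₀| + R / 4 * C + |c| * b := by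
    intro σ hσ t ht
    have h0 : (0 : ℝ) ∈ Ico 0 b := ⟨le_rfl, ht.1.trans_lt ht.2⟩
    have hanti := antitoneOn_Ico_of_hasDerivWithinAt_nonpos
      (f := fun t => σ * w t + R / 4 * N t - c * t)
      (fun t ht => (((hw t ht).const_mul σ).add ((hN' t ht).const_mul (R / 4))).sub
        ((hasDerivAt_id t).hasDerivWithinAt.const_mul c))
      (fun t ht => by linarith [hderiv σ hσ t ht]) h0 ht ht.1
    simp only [hs.init_w, hs.init_N, mul_zero, add_zero, sub_zero] at hanti
    have hσw₀ : σ * w₀ ≤ |w₀| := by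
      nlinarith [sq_nonneg (σ * w₀ - |w₀|), sq_abs w₀, abs_nonneg w₀]
    have hRN : -(R / 4 * N t) ≤ R / 4 * C := by
      nlinarith [(abs_le.1 (hN t ht)).1, (hR t ht).1, (hR t ht).2]
    have hct : c * t ≤ |c| * b :=
      (mul_le_mul_of_nonneg_right (le_abs_self c) ht.1).trans
        (mul_le_mul_of_nonneg_left ht.2.le (abs_nonneg c))
    linarith
  refine ⟨|w₀| + R / 4 * C + |c| * b, fun t ht => abs_le.2 ⟨?_, ?_⟩⟩
  · linarith [hσw (-1) (by norm_num) t ht]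
  · simpa using hσw 1 (by norm_num) t ht

theorem IsShootingSolOn.exists_abs_U_le (hs : IsShootingSolOn r₀ w₀ U₀ b r N w U κ ζ)
    (hN : ∀ t ∈ Ico 0 b, |N t| ≤ C) : ∃ V, ∀ t ∈ Ico 0 b, |U t| ≤ V := by
  obtain ⟨W, hW⟩ := hs.exists_abs_w_le hN
  set ε := r₀ * exp (-(C * b))
  refine ⟨1 + ((1 + W ^ 2) ^ 2 / ε ^ 2 + ζ 0 ^ 2 + 2 * (2 * √(1 + ζ 0 ^ 2) + 1 + C) * C) / 2,
    fun t ht => ?_⟩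
  have hεr : ε ≤ r t := (hs.r_mem_Icc hN t ht).1
  have hε : 0 < ε := mul_pos (hs.init_r_pos (ht.1.trans_lt ht.2)) (exp_pos _)
  have hQ : (1 - w t ^ 2) ^ 2 / r t ^ 2 ≤ (1 + W ^ 2) ^ 2 / ε ^ 2 := by
    have hw := sq_le_sq' (abs_le.1 (hW t ht)).1 (abs_le.1 (hW t ht)).2
    apply div_le_div₀ (by positivity) _ (by positivity) (pow_le_pow_left₀ hε.le hεr 2)
    nlinarith [sq_nonneg (w t)]
  nlinarith [hs.two_mul_U_sq_sub_le hN t ht, sq_abs (U t), abs_nonneg (U t)]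

theorem IsShootingSolOn.bounded_of_abs_N_le (hs : IsShootingSolOn r₀ w₀ U₀ b r N w U κ ζ)
    (hb : 0 < b) (hN : ∀ t ∈ Ico 0 b, |N t| ≤ C) :
    (∃ C' : ℝ, ∀ t ∈ Ico 0 b,
      |r t| ≤ C' ∧ |N t| ≤ C' ∧ |w t| ≤ C' ∧ |U t| ≤ C' ∧ |κ t| ≤ C' ∧ |ζ t| ≤ C') ∧
    ∃ ε : ℝ, 0 < ε ∧ ∀ t ∈ Ico 0 b, ε ≤ r t := by
  obtain ⟨W, hW⟩ := hs.exists_abs_w_le hN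
  obtain ⟨V, hV⟩ := hs.exists_abs_U_le hN
  have h0 : (0 : ℝ) ∈ Ico 0 b := ⟨le_rfl, hb⟩
  have hr₀ := hs.init_r_pos hb
  have hC : 0 ≤ C := (abs_nonneg _).trans (hN 0 h0)
  refine ⟨⟨r₀ * exp (C * b) + C + W + V + (2 * √(1 + ζ 0 ^ 2) + 1 + C) + (1 + ζ 0 ^ 2),
    fun t ht => ?_⟩, r₀ * exp (-(C * b)), by positivity, fun t ht => (hs.r_mem_Icc hN t ht).1⟩
  have hr := hs.r_mem_Icc hN t ht
  have hr' : |r t| ≤ r₀ * exp (C * b) := by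
    rw [abs_of_pos (hs.r_pos t (by rwa [fwdDom_coe]))]; exact hr.2
  have hκ : |κ t| ≤ 2 * √(1 + ζ 0 ^ 2) + 1 + C := by
    rw [abs_of_nonneg (hs.kappa_nonneg t ht)]; exact hs.kappa_le hN t ht
  have hζ : |ζ t| ≤ 1 + ζ 0 ^ 2 := by
    nlinarith [hs.zeta_sq_le t ht, sq_abs (ζ t), abs_nonneg (ζ t)]
  have hW₀ : 0 ≤ W := (abs_nonneg _).trans (hW 0 h0)
  have hV₀ : 0 ≤ V := (abs_nonneg _).trans (hV 0 h0)
  have hR₀ : 0 ≤ r₀ * exp (C * b) := by positivity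
  have hK₀ : 0 ≤ 2 * √(1 + ζ 0 ^ 2) + 1 + C := by positivity
  have hZ₀ : 0 ≤ 1 + ζ 0 ^ 2 := by positivity
  exact ⟨by linarith, by linarith [hN t ht], by linarith [hW t ht], by linarith [hV t ht],
    by linarith, by linarith⟩

theorem isShootingSolOn_of_hasDerivWithinAt {γ : ℝ → ℝ × ℝ × ℝ × ℝ × ℝ × ℝ} {c : ℝ}
    (h0 : γ 0 = (r₀, 0, w₀, U₀, 0, √(initialEnergy r₀ w₀ U₀)))
    (hcon₀ : constraintDefect (γ 0) = 0) (hpos : ∀ t ∈ Ico 0 c, 0 < (γ t).1)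
    (hode : ∀ t ∈ Ico 0 c, HasDerivWithinAt γ (shootingField (γ t)) (Ico 0 c) t) :
    IsShootingSolOn r₀ w₀ U₀ c (fun t => (γ t).1) (fun t => (γ t).2.1) (fun t => (γ t).2.2.1)
      (fun t => (γ t).2.2.2.1) (fun t => (γ t).2.2.2.2.1) (fun t => (γ t).2.2.2.2.2) := by
  have hcon : ∀ t ∈ Ico 0 c, constraintDefect (γ t) = 0 :=
    eq_zero_of_hasDerivWithinAt_Ico_eq_smul
      (fun t ht => hasDerivWithinAt_constraintDefect (hode t ht) (hpos t ht).ne')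
      (fun t ht => ((hasDerivWithinAt_shootingField_iff.1 (hode t ht)).2.2.2.2.1
        |>.continuousWithinAt.const_mul (-2)))
      hcon₀
  rw [← fwdDom_coe] at hpos hode hcon
  have hode' := fun t ht => hasDerivWithinAt_shootingField_iff.1 (hode t ht)
  exact
    { init_r := congrArg (·.1) h0
      init_N := congrArg (·.2.1) h0
      init_w := congrArg (·.2.2.1) h0
      init_U := congrArg (·.2.2.2.1) h0
      init_κ := congrArg (·.2.2.2.2.1) h0
      init_ζ := congrArg (·.2.2.2.2.2) h0
      r_pos := hpos
      ode_r := fun t ht => (hode' t ht).1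
      ode_N := fun t ht => (hode' t ht).2.1
      ode_w := fun t ht => (hode' t ht).2.2.1
      ode_U := fun t ht => (hode' t ht).2.2.2.1
      ode_κ := fun t ht => (hode' t ht).2.2.2.2.1
      ode_ζ := fun t ht => (hode' t ht).2.2.2.2.2
      constraint := fun t ht => sub_eq_zero.1 (hcon t ht) }

theorem IsShootingSolOn.exists_extension (hs : IsShootingSolOn r₀ w₀ U₀ b r N w U κ ζ)
    (hb : 0 < b)
    (hbdd : ∃ C : ℝ, ∀ t ∈ Ico 0 b,
      |r t| ≤ C ∧ |N t| ≤ C ∧ |w t| ≤ C ∧ |U t| ≤ C ∧ |κ t| ≤ C ∧ |ζ t| ≤ C)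
    (hr : ∃ ε : ℝ, 0 < ε ∧ ∀ t ∈ Ico 0 b, ε ≤ r t) :
    ∃ c : EReal, (b : EReal) < c ∧
      ∃ r' N' w' U' κ' ζ' : ℝ → ℝ, IsShootingSolOn r₀ w₀ U₀ c r' N' w' U' κ' ζ' := by
  obtain ⟨C, hC⟩ := hbdd
  obtain ⟨ε, hε, hεr⟩ := hr
  have h0 : (0 : ℝ) ∈ fwdDom b := by rw [fwdDom_coe]; exact ⟨le_rfl, hb⟩
  have hode : ∀ t ∈ Ico 0 b, HasDerivWithinAt (fun x => (r x, N x, w x, U x, κ x, ζ x))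
      (shootingField (r t, N t, w t, U t, κ t, ζ t)) (Ico 0 b) t := by
    rw [← fwdDom_coe]
    exact fun t ht => hasDerivWithinAt_shootingField_iff.2
      ⟨hs.ode_r t ht, hs.ode_N t ht, hs.ode_w t ht, hs.ode_U t ht, hs.ode_κ t ht, hs.ode_ζ t ht⟩
  set K := Metric.closedBall 0 C ∩ {p : ℝ × ℝ × ℝ × ℝ × ℝ × ℝ | ε ≤ p.1}
  have hK : IsCompact K :=
    (isCompact_closedBall _ C).inter_right (isClosed_le continuous_const continuous_fst)
  have hmemK : ∀ t ∈ Ico 0 b, (r t, N t, w t, U t, κ t, ζ t) ∈ K := fun t ht =>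
    ⟨by simpa only [Metric.mem_closedBall, dist_zero_right, norm_prod_le_iff, Real.norm_eq_abs]
      using hC t ht, hεr t ht⟩
  obtain ⟨c, hbc, γ, hγ, hγpos, hγode⟩ := exists_extension_of_mem_compact
    (isOpen_lt continuous_const continuous_fst) (fun p hp => shootingField_contDiffAt hp.ne') hK
    (fun p hp => hε.trans_le hp.2) hb hode hmemK
  have hγ0 : γ 0 = (r 0, N 0, w 0, U 0, κ 0, ζ 0) := hγ ⟨le_rfl, hb⟩
  refine ⟨c, EReal.coe_lt_coe_iff.2 hbc, _, _, _, _, _, _,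
    isShootingSolOn_of_hasDerivWithinAt ?_ ?_ hγpos hγode⟩
  · rw [hγ0, hs.init_r, hs.init_N, hs.init_w, hs.init_U, hs.init_κ, hs.init_ζ]
  · rw [hγ0]
    exact sub_eq_zero.2 (hs.constraint 0 h0)

end ShootingSolution

theorem continuation_when_N_bounded_general (r₀ w₀ U₀ : ℝ)
    (ρmax : EReal) (r N w U κ ζ : ℝ → ℝ)
    (hsol : IsMaximalShootingSol r₀ w₀ U₀ ρmax r N w U κ ζ)
    (ρb : ℝ) (hρb : 0 < ρb) (hdom : (ρb : EReal) ≤ ρmax)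
    (hN : ∃ C : ℝ, ∀ ρ ∈ Set.Ico (0:ℝ) ρb, |N ρ| ≤ C) :
    (∃ C : ℝ, ∀ ρ ∈ Set.Ico (0:ℝ) ρb,
      |r ρ| ≤ C ∧ |N ρ| ≤ C ∧ |w ρ| ≤ C ∧ |U ρ| ≤ C ∧ |κ ρ| ≤ C ∧ |ζ ρ| ≤ C) ∧
    (∃ ε : ℝ, 0 < ε ∧ ∀ ρ ∈ Set.Ico (0:ℝ) ρb, ε ≤ r ρ) ∧
    (ρb : EReal) < ρmax := by
  obtain ⟨-, hs, hmax⟩ := hsol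
  obtain ⟨C, hC⟩ := hN
  replace hs := hs.mono hdom
  obtain ⟨hbdd, hr⟩ := hs.bounded_of_abs_N_le hρb hC
  refine ⟨hbdd, hr, hdom.lt_of_ne fun heq => ?_⟩
  obtain ⟨c, hc, hext⟩ := hs.exists_extension hρb hbdd hr
  exact hmax c (heq ▸ hc) hext

/-- If `N` remains bounded on `[0, ρ̄)` with `ρ̄ ≤ ρmax` finite, then all dependent
variables remain bounded there, `r` stays away from `0`, and the solution continues
beyond `ρ̄` (i.e. `ρ̄ < ρmax`). -/
theorem continuation_when_N_bounded (r₀ w₀ U₀ : ℝ) (hadm : Admissible r₀ w₀ U₀)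
    (ρmax : EReal) (r N w U κ ζ : ℝ → ℝ)
    (hsol : IsMaximalShootingSol r₀ w₀ U₀ ρmax r N w U κ ζ)
    (ρb : ℝ) (hρb : 0 < ρb) (hdom : (ρb : EReal) ≤ ρmax)
    (hN : ∃ C : ℝ, ∀ ρ ∈ Set.Ico (0:ℝ) ρb, |N ρ| ≤ C) :
    (∃ C : ℝ, ∀ ρ ∈ Set.Ico (0:ℝ) ρb,
      |r ρ| ≤ C ∧ |N ρ| ≤ C ∧ |w ρ| ≤ C ∧ |U ρ| ≤ C ∧ |κ ρ| ≤ C ∧ |ζ ρ| ≤ C) ∧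
    (∃ ε : ℝ, 0 < ε ∧ ∀ ρ ∈ Set.Ico (0:ℝ) ρb, ε ≤ r ρ) ∧
    (ρb : EReal) < ρmax :=
  continuation_when_N_bounded_general r₀ w₀ U₀ ρmax r N w U κ ζ hsol ρb hρb hdom hN
end
end
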